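/- Suppose Algorithm 1 is run on an on-line P_9-free bipartite graph G. Let x be a vertex with color index i ≥ 2, and let y be a vertex of C_{i−1}(x) with color index j that lies on the opposite side of G from x and is not adjacent to x. If there is no induced path on 5 vertices in C_{i−1}^y[x] with one endpoint x, then x has a neighbor in C_{i−1}^y(x) that is universal to C_{j−1}[y]. -/
import Mathlib


/-! ### P_n-free graphs -/

/-- `f` lists the vertices of an induced path on `n` vertices in `G`. -/
def IsInducedPath {V : Type*} (G : SimpleGraph V) (n : ℕ) (f : Fin n → V) : Prop :=
  Function.Injective f ∧
    ∀ a b : Fin n, G.Adj (f a) (f b) ↔ (a.val + 1 = b.val ∨ b.val + 1 = a.val)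

/-- `G` contains no induced path on `n` vertices. -/
def PFree {V : Type*} (G : SimpleGraph V) (n : ℕ) : Prop :=
  ¬ ∃ f : Fin n → V, IsInducedPath G n f

/-! ### Algorithm 1 -/

/-- The three palettes of colors `a_i`, `b_i`, `c_i` used by Algorithm 1. -/
inductive PalColor : Type
  | a : ℕ → PalColor
  | b : ℕ → PalColor
  | c : ℕ → PalColor
  deriving DecidableEq

/-- The index of a color. -/
def PalColor.index : PalColor → ℕ
  | a i => i
  | b i => i
  | c i => i

/-- A vertex `u` has color index `j` when its color is `a_j` or `b_j`. -/
def hasColorIndex (col : ℕ → PalColor) (u j : ℕ) : Prop :=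
  col u = PalColor.a j ∨ col u = PalColor.b j

/-- Vertex set of `G_i[u]` at time `t` (vertices are presented in the order `0, 1, 2, …`):
the vertices presented before time `t` whose color has index between `1` and `i`,
together with `u`. -/
def domSet (col : ℕ → PalColor) (t i u : ℕ) : Set ℕ :=
  {w | (w < t ∧ 1 ≤ (col w).index ∧ (col w).index ≤ i) ∨ w = u}

/-- `x` and `y` are connected within the subgraph of `G` induced on `S`. -/
def ReachIn (G : SimpleGraph ℕ) (S : Set ℕ) (x y : ℕ) : Prop :=
  ∃ (hx : x ∈ S) (hy : y ∈ S), (G.induce S).Reachable ⟨x, hx⟩ ⟨y, hy⟩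

/-- `x` and `y` are joined by a walk of even length within the subgraph of `G` induced on `S`;
in a bipartite graph this says exactly that `x` and `y` are on the same side of their
(common) connected component. -/
def EvenReachIn (G : SimpleGraph ℕ) (S : Set ℕ) (x y : ℕ) : Prop :=
  ∃ (hx : x ∈ S) (hy : y ∈ S) (p : (G.induce S).Walk ⟨x, hx⟩ ⟨y, hy⟩), Even p.length

/-- `C_i[u]` at time `t`: the connected component of `u` in the subgraph induced on
`domSet col t i u`. -/
def comp (G : SimpleGraph ℕ) (col : ℕ → PalColor) (t i u : ℕ) : Set ℕ :=
  {w | ReachIn G (domSet col t i u) u w}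

/-- `C_i^y(u)` at time `t`: the connected component of `y` in `C_i(u) = C_i[u] \ {u}`. -/
def compMinus (G : SimpleGraph ℕ) (col : ℕ → PalColor) (t i u y : ℕ) : Set ℕ :=
  {w | ReachIn G (domSet col t i u \ {u}) y w}

/-- Color `a_i` is mixed in `C_i[t]` at time `t`: vertices on both sides of `C_i[t]`
have color `a_i`. -/
def MixedA (G : SimpleGraph ℕ) (col : ℕ → PalColor) (t i : ℕ) : Prop :=
  ∃ x ∈ comp G col t i t, ∃ y ∈ comp G col t i t,
    col x = PalColor.a i ∧ col y = PalColor.a i ∧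
    ¬ EvenReachIn G (domSet col t i t) x y

/-- `m = max {i ≥ 1 | a_i is mixed in C_i[t]} + 1` (with `max ∅ = 0`). -/
noncomputable def mIdx (G : SimpleGraph ℕ) (col : ℕ → PalColor) (t : ℕ) : ℕ :=
  sSup {i | 1 ≤ i ∧ MixedA G col t i} + 1

/-- `u'` is universal to `C_{j-1}[u]` (at time `t`): `u'` is adjacent to all vertices in one of
the two sides of `C_{j-1}[u]`. -/
def UnivTo (G : SimpleGraph ℕ) (col : ℕ → PalColor) (t j u u' : ℕ) : Prop :=
  (∀ x ∈ comp G col t (j-1) u, EvenReachIn G (domSet col t (j-1) u) u x → G.Adj u' x) ∨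
  (∀ x ∈ comp G col t (j-1) u, ¬ EvenReachIn G (domSet col t (j-1) u) u x → G.Adj u' x)

open Classical in
/-- One step of Algorithm 1: the color given to the vertex presented at time `t`, assuming that
`col` records the colors of the previously presented vertices `0, …, t-1`. -/
noncomputable def step (G : SimpleGraph ℕ) (col : ℕ → PalColor) (t : ℕ) : PalColor :=
  let m := mIdx G col t
  let S := domSet col t m t
  let C := comp G col t m t
  let I1 : Set ℕ := {x ∈ C | EvenReachIn G S t x}
  let I2 : Set ℕ := {x ∈ C | ¬ EvenReachIn G S t x}
  if ∃ u ∈ I2, col u = PalColor.a m then PalColor.b m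
  else if ∃ u ∈ I2, col u = PalColor.c m then PalColor.a m
  else if ∃ u ∈ I1 ∪ I2, ∃ u' ∈ I2, ∃ j : ℕ, hasColorIndex col u j ∧
      ((m : ℝ) - Real.sqrt (2 * m) + 2 ≤ (j : ℝ)) ∧ UnivTo G col t j u u'
    then PalColor.c m
  else PalColor.a m

/-- The colors of the first `k` presented vertices under Algorithm 1 (junk elsewhere). -/
noncomputable def algoColAux (G : SimpleGraph ℕ) : ℕ → ℕ → PalColor
  | 0 => fun _ => PalColor.a 0
  | (k+1) => fun w => if w = k then step G (algoColAux G k) k else algoColAux G k w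

/-- `algoCol G v` is the color that Algorithm 1 assigns to vertex `v` when the on-line graph `G`
is presented in the vertex order `0, 1, 2, …`. -/
noncomputable def algoCol (G : SimpleGraph ℕ) (v : ℕ) : PalColor :=
  algoColAux G (v + 1) v

/-- The on-line graph on `ℕ` obtained by presenting the vertices of `G` in the order given by
the enumeration `π` (vertices `≥ n` are isolated). -/
def toNatGraph {V : Type*} (G : SimpleGraph V) {n : ℕ} (π : Fin n ≃ V) : SimpleGraph ℕ :=
  SimpleGraph.fromRel (fun i j => ∃ (hi : i < n) (hj : j < n), G.Adj (π ⟨i, hi⟩) (π ⟨j, hj⟩))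

/-! ### Children, grandchildren and the sets `S_i(v)` -/

/-- There is no induced path on 5 vertices of `G` inside `S` with `v` as an endpoint. -/
def NoP5From (G : SimpleGraph ℕ) (S : Set ℕ) (v : ℕ) : Prop :=
  ¬ ∃ f : Fin 5 → ℕ, (∀ l, f l ∈ S) ∧ IsInducedPath G 5 f ∧ (f 0 = v ∨ f 4 = v)

section Helpers

open SimpleGraph

variable {G : SimpleGraph ℕ}

lemma reachIn_refl {S : Set ℕ} {a : ℕ} (ha : a ∈ S) : ReachIn G S a a :=
  ⟨ha, ha, Reachable.refl _⟩

lemma reachIn_symm {S : Set ℕ} {a b : ℕ} (h : ReachIn G S a b) : ReachIn G S b a := by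
  obtain ⟨ha, hb, hr⟩ := h; exact ⟨hb, ha, hr.symm⟩

lemma reachIn_trans {S : Set ℕ} {a b c : ℕ} (h1 : ReachIn G S a b) (h2 : ReachIn G S b c) :
    ReachIn G S a c := by
  obtain ⟨ha, hb, hr⟩ := h1; obtain ⟨hb', hc, hr'⟩ := h2
  exact ⟨ha, hc, hr.trans hr'⟩

lemma reachIn_left_mem {S : Set ℕ} {a b : ℕ} (h : ReachIn G S a b) : a ∈ S := h.1

lemma reachIn_right_mem {S : Set ℕ} {a b : ℕ} (h : ReachIn G S a b) : b ∈ S := h.2.1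

lemma reachIn_adj {S : Set ℕ} {a b : ℕ} (ha : a ∈ S) (hb : b ∈ S) (hadj : G.Adj a b) :
    ReachIn G S a b :=
  ⟨ha, hb, SimpleGraph.Adj.reachable (by exact hadj : (G.induce S).Adj ⟨a, ha⟩ ⟨b, hb⟩)⟩

def inclHom (G : SimpleGraph ℕ) {S T : Set ℕ} (hST : S ⊆ T) : G.induce S →g G.induce T :=
  ⟨fun v => ⟨v.1, hST v.2⟩, fun h => h⟩

lemma reachIn_mono {S T : Set ℕ} (hST : S ⊆ T) {a b : ℕ} (h : ReachIn G S a b) :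
    ReachIn G T a b := by
  obtain ⟨ha, hb, hr⟩ := h
  exact ⟨hST ha, hST hb, Reachable.map (inclHom G hST) hr⟩

lemma reachIn_of_walk_support {T S : Set ℕ} {a b : T} (p : (G.induce T).Walk a b)
    (hs : ∀ v ∈ p.support, (v : ℕ) ∈ S) : ReachIn G S a b := by
  induction p with
  | nil => exact reachIn_refl (hs _ (SimpleGraph.Walk.start_mem_support _))
  | @cons u c v e q ih =>
    refine reachIn_trans (reachIn_adj (hs _ ?_) (hs _ ?_) e) (ih fun v hv => hs v ?_)
    · simp [SimpleGraph.Walk.support_cons]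
    · simp [SimpleGraph.Walk.support_cons, SimpleGraph.Walk.start_mem_support]
    · simp [SimpleGraph.Walk.support_cons]; right; exact hv

variable (side : ℕ → Bool)

lemma walk_parity (hside : ∀ x y, G.Adj x y → side x ≠ side y) {S : Set ℕ} {a b : S} (p : (G.induce S).Walk a b) :
    Even p.length ↔ side (a : ℕ) = side (b : ℕ) := by
  induction p with
  | nil => simp
  | @cons u c v e q ih =>
    have hne : side (u : ℕ) ≠ side (c : ℕ) := hside _ _ e
    simp only [SimpleGraph.Walk.length_cons, Nat.even_add_one, ih]
    cases hu : side (u : ℕ) <;> cases hc : side (c : ℕ) <;> cases hb : side (b : ℕ) <;>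
      simp_all

lemma evenReachIn_iff_of_reach (hside : ∀ x y, G.Adj x y → side x ≠ side y) {S : Set ℕ} {a b : ℕ} (h : ReachIn G S a b) :
    EvenReachIn G S a b ↔ side a = side b := by
  obtain ⟨ha, hb, hr⟩ := h
  constructor
  · rintro ⟨ha', hb', p, hp⟩
    exact (walk_parity side hside p).mp hp
  · intro hs
    obtain ⟨p⟩ := hr
    exact ⟨ha, hb, p, (walk_parity side hside p).mpr hs⟩

lemma side_ne_of_not_even (hside : ∀ x y, G.Adj x y → side x ≠ side y) {S : Set ℕ} {a b : ℕ} (h : ReachIn G S a b)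
    (hne : ¬ EvenReachIn G S a b) : side a ≠ side b := by
  intro hs; exact hne ((evenReachIn_iff_of_reach side hside h).mpr hs)

lemma evenReachIn_refl {S : Set ℕ} {a : ℕ} (ha : a ∈ S) : EvenReachIn G S a a :=
  ⟨ha, ha, SimpleGraph.Walk.nil, by simp⟩

end Helpers
section Algo

variable (G : SimpleGraph ℕ)

lemma algoColAux_eq {t w : ℕ} (h : w < t) : algoColAux G t w = algoCol G w := by
  induction t with
  | zero => omega
  | succ t ih =>
    by_cases hw : w = t
    · subst hw; rfl
    · have hwt : w < t := by omega
      show (if w = t then step G (algoColAux G t) t else algoColAux G t w) = _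
      rw [if_neg hw, ih hwt]

lemma domSet_aux_eq (t k u : ℕ) : domSet (algoColAux G t) t k u = domSet (algoCol G) t k u := by
  ext w
  simp only [domSet, Set.mem_setOf_eq]
  constructor
  · rintro (⟨h1, h2, h3⟩ | h)
    · rw [algoColAux_eq G h1] at h2 h3; exact Or.inl ⟨h1, h2, h3⟩
    · exact Or.inr h
  · rintro (⟨h1, h2, h3⟩ | h)
    · rw [← algoColAux_eq G h1] at h2 h3; exact Or.inl ⟨h1, h2, h3⟩
    · exact Or.inr h

lemma index_step (col : ℕ → PalColor) (t : ℕ) : (step G col t).index = mIdx G col t := by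
  unfold step
  dsimp only
  split_ifs <;> rfl

lemma index_algoCol (t : ℕ) : (algoCol G t).index = mIdx G (algoColAux G t) t := by
  have : algoCol G t = step G (algoColAux G t) t := by
    show (if t = t then step G (algoColAux G t) t else algoColAux G t t) = _
    rw [if_pos rfl]
  rw [this, index_step]

lemma mIdx_pos (col : ℕ → PalColor) (t : ℕ) : 1 ≤ mIdx G col t := Nat.le_add_left 1 _

lemma hasColorIndex_index {col : ℕ → PalColor} {u k : ℕ} (h : hasColorIndex col u k) :
    (col u).index = k := by
  rcases h with h | h <;> rw [h] <;> rfl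

lemma mIdx_eq_of_hasColorIndex {t k : ℕ} (h : hasColorIndex (algoCol G) t k) :
    mIdx G (algoColAux G t) t = k := by
  rw [← index_algoCol, hasColorIndex_index h]

lemma mixed_bddAbove (col : ℕ → PalColor) (t : ℕ) :
    BddAbove {i | 1 ≤ i ∧ MixedA G col t i} := by
  have hsub : {i | 1 ≤ i ∧ MixedA G col t i} ⊆
      ↑((Finset.range (t + 1)).image fun w => (col w).index) := by
    rintro i ⟨hi1, x, hx, y, hy, hcx, hcy, hne⟩
    have hxd : x ∈ domSet col t i t := reachIn_right_mem hx
    have : x < t + 1 := by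
      rcases hxd with ⟨h1, _, _⟩ | h
      · omega
      · omega
    simp only [Finset.coe_image, Set.mem_image, Finset.mem_coe, Finset.mem_range]
    exact ⟨x, by simpa using this, by rw [hcx]; rfl⟩
  exact BddAbove.mono hsub ((Finset.range (t + 1)).image fun w => (col w).index).bddAbove

lemma mIdx_gt_of_mixed {col : ℕ → PalColor} {t k : ℕ} (hk : 1 ≤ k) (h : MixedA G col t k) :
    k + 1 ≤ mIdx G col t := by
  have : k ≤ sSup {i | 1 ≤ i ∧ MixedA G col t i} :=
    le_csSup (mixed_bddAbove G col t) ⟨hk, h⟩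
  simpa [mIdx] using Nat.add_le_add_right this 1

lemma mixedA_of_mIdx {t j : ℕ} (hj : 2 ≤ j) (h : mIdx G (algoColAux G t) t = j) :
    MixedA G (algoColAux G t) t (j - 1) := by
  have h' : sSup {i | 1 ≤ i ∧ MixedA G (algoColAux G t) t i} + 1 = j := h
  set s := {i | 1 ≤ i ∧ MixedA G (algoColAux G t) t i} with hs
  have hsup : sSup s = j - 1 := by omega
  have hne : s.Nonempty := by
    by_contra hemp
    rw [Set.not_nonempty_iff_eq_empty] at hemp
    rw [hemp] at hsup
    simp [csSup_empty] at hsup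
    omega
  have := Nat.sSup_mem hne (mixed_bddAbove G _ t)
  rw [hsup] at this
  exact this.2

end Algo
section Inv

open SimpleGraph

variable (G : SimpleGraph ℕ)

lemma step_eq_b (col : ℕ → PalColor) (t : ℕ)
    (h : ∃ u, (u ∈ comp G col t (mIdx G col t) t ∧
        ¬ EvenReachIn G (domSet col t (mIdx G col t) t) t u) ∧
        col u = PalColor.a (mIdx G col t)) :
    step G col t = PalColor.b (mIdx G col t) := by
  unfold step
  dsimp only
  exact if_pos h

lemma reachIn_through {t : ℕ} {S : Set ℕ} {p q : ℕ} (h : ReachIn G S p q) :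
    ReachIn G (S \ {t}) p q ∨ (ReachIn G S p t ∧ ReachIn G S t q) := by
  obtain ⟨hp, hq, ⟨w⟩⟩ := h
  by_cases ht : ∃ v ∈ w.support, (v : ℕ) = t
  · obtain ⟨⟨v1, hv1⟩, htv, hval⟩ := ht
    simp only at hval
    subst hval
    right
    exact ⟨⟨hp, hv1, ⟨w.takeUntil _ htv⟩⟩, ⟨hv1, hq, ⟨w.dropUntil _ htv⟩⟩⟩
  · left
    push_neg at ht
    refine reachIn_of_walk_support w fun v hv => ⟨v.2, ?_⟩
    simp only [Set.mem_singleton_iff]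
    exact ht v hv

/-- The set of previously presented vertices with color index between 1 and `k`. -/
def Sk (G : SimpleGraph ℕ) (t k : ℕ) : Set ℕ :=
  {w | w < t ∧ 1 ≤ (algoCol G w).index ∧ (algoCol G w).index ≤ k}

lemma Sk_succ_not (t k : ℕ) (h : ¬ (1 ≤ (algoCol G t).index ∧ (algoCol G t).index ≤ k)) :
    Sk G (t + 1) k = Sk G t k := by
  ext w
  simp only [Sk, Set.mem_setOf_eq]
  constructor
  · rintro ⟨h1, h2, h3⟩
    rcases Nat.lt_succ_iff_lt_or_eq.mp h1 with h1 | rfl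
    · exact ⟨h1, h2, h3⟩
    · exact absurd ⟨h2, h3⟩ h
  · rintro ⟨h1, h2, h3⟩
    exact ⟨by omega, h2, h3⟩

lemma Sk_succ_yes (t k : ℕ) (h : 1 ≤ (algoCol G t).index ∧ (algoCol G t).index ≤ k) :
    Sk G (t + 1) k = domSet (algoCol G) t k t := by
  ext w
  simp only [Sk, Set.mem_setOf_eq, domSet]
  constructor
  · rintro ⟨h1, h2, h3⟩
    rcases Nat.lt_succ_iff_lt_or_eq.mp h1 with h1 | rfl
    · exact Or.inl ⟨h1, h2, h3⟩
    · exact Or.inr rfl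
  · rintro (⟨h1, h2, h3⟩ | rfl)
    · exact ⟨by omega, h2, h3⟩
    · exact ⟨by omega, h⟩

lemma Sk_diff (t k : ℕ) : Sk G (t + 1) k \ {t} = Sk G t k \ {t} := by
  ext w
  simp only [Sk, Set.mem_diff, Set.mem_setOf_eq, Set.mem_singleton_iff]
  constructor
  · rintro ⟨⟨h1, h2, h3⟩, h4⟩
    exact ⟨⟨by omega, h2, h3⟩, h4⟩
  · rintro ⟨⟨h1, h2, h3⟩, h4⟩
    exact ⟨⟨by omega, h2, h3⟩, h4⟩

variable (side : ℕ → Bool)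

/-- KEY INVARIANT: at any time `t`, the color `a_k` is never mixed on a connected component
of the graph spanned by the already presented vertices of color index between 1 and `k`. -/
lemma INV (hside : ∀ x y, G.Adj x y → side x ≠ side y) :
    ∀ t k p q, 1 ≤ k → ReachIn G (Sk G t k) p q →
      algoCol G p = PalColor.a k → algoCol G q = PalColor.a k → side p = side q := by
  intro t
  induction t with
  | zero =>
    intro k p q _ h _ _
    exact absurd (reachIn_left_mem h) (by simp [Sk])
  | succ t ih =>
    intro k p q hk h hp hq
    by_cases hidx : 1 ≤ (algoCol G t).index ∧ (algoCol G t).index ≤ k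
    · -- t joins the graph
      rw [Sk_succ_yes G t k hidx] at h
      -- either the connection avoids t, or goes through t
      rcases reachIn_through G h with h' | ⟨h1, h2⟩
      · refine ih k p q hk ?_ hp hq
        have hsub : domSet (algoCol G) t k t \ {t} ⊆ Sk G t k := by
          rintro w ⟨hw1, hw2⟩
          simp only [Set.mem_singleton_iff] at hw2
          rcases hw1 with ⟨h1', h2', h3'⟩ | rfl
          · exact ⟨h1', h2', h3'⟩
          · exact absurd rfl hw2
        exact reachIn_mono hsub h'
      · -- p and q both reach t
        -- translate to the aux coloring used by the algorithm at time t
        have hds : domSet (algoCol G) t k t = domSet (algoColAux G t) t k t :=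
          (domSet_aux_eq G t k t).symm
        rw [hds] at h1 h2
        by_contra hne
        -- case analysis on whether p or q equals t
        have hql : q ∈ domSet (algoColAux G t) t k t := reachIn_right_mem h2
        have hpl : p ∈ domSet (algoColAux G t) t k t := reachIn_left_mem h1
        have hplt : p < t ∨ p = t := by
          rcases hpl with ⟨h1', _, _⟩ | rfl
          · exact Or.inl h1'
          · exact Or.inr rfl
        have hqlt : q < t ∨ q = t := by
          rcases hql with ⟨h1', _, _⟩ | rfl
          · exact Or.inl h1'
          · exact Or.inr rfl
        have hstep : algoCol G t = step G (algoColAux G t) t := by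
          show (if t = t then step G (algoColAux G t) t else algoColAux G t t) = _
          rw [if_pos rfl]
        -- helper: the b-rule fires if t itself is one of the two mixed `a_k` vertices
        have hbrule : ∀ r : ℕ, algoCol G t = PalColor.a k → r < t →
            algoCol G r = PalColor.a k → side r ≠ side t →
            ReachIn G (domSet (algoColAux G t) t k t) t r → False := by
          intro r hta hrt hra hrs hreach
          have hm : mIdx G (algoColAux G t) t = k := by
            have := index_algoCol G t
            rw [hta] at this
            exact this.symm
          have hb : step G (algoColAux G t) t = PalColor.b (mIdx G (algoColAux G t) t) := by
            refine step_eq_b G _ t ⟨r, ⟨?_, ?_⟩, ?_⟩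
            · rw [hm]; exact hreach
            · rw [hm]
              intro hev
              have : side t = side r :=
                (evenReachIn_iff_of_reach side hside (hm ▸ hreach)).mp hev
              exact hrs this.symm
            · rw [hm, algoColAux_eq G hrt]
              exact hra
          rw [hstep, hb, hm] at hta
          exact PalColor.noConfusion hta
        rcases hplt with hplt | hpt
        · rcases hqlt with hqlt | hqt
          · -- both p and q are old: a_k would have been mixed in C_k[t], so t's index exceeds k
            have hmix : MixedA G (algoColAux G t) t k := by
              refine ⟨p, reachIn_symm h1, q, h2, ?_, ?_, ?_⟩
              · rw [algoColAux_eq G hplt]; exact hp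
              · rw [algoColAux_eq G hqlt]; exact hq
              · intro hev
                exact hne ((evenReachIn_iff_of_reach side hside
                  (reachIn_trans h1 h2)).mp hev)
            have := mIdx_gt_of_mixed G hk hmix
            rw [← index_algoCol G t] at this
            omega
          · -- q = t
            subst hqt
            exact hbrule p hq hplt hp hne (reachIn_symm h1)
        · -- p = t
          subst hpt
          rcases hqlt with hqlt | hqt
          · exact hbrule q hp hqlt hq (fun hs => hne hs.symm) h2
          · subst hqt
            exact hne rfl
    · rw [Sk_succ_not G t k hidx] at h
      exact ih k p q hk h hp hq

end Inv
section P5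

variable {G : SimpleGraph ℕ}

lemma p5_contra {S : Set ℕ} {v0 v1 v2 v3 v4 : ℕ}
    (hno : NoP5From G S v0)
    (m0 : v0 ∈ S) (m1 : v1 ∈ S) (m2 : v2 ∈ S) (m3 : v3 ∈ S) (m4 : v4 ∈ S)
    (a01 : G.Adj v0 v1) (a12 : G.Adj v1 v2) (a23 : G.Adj v2 v3) (a34 : G.Adj v3 v4)
    (n02 : ¬ G.Adj v0 v2) (n03 : ¬ G.Adj v0 v3) (n04 : ¬ G.Adj v0 v4)
    (n13 : ¬ G.Adj v1 v3) (n14 : ¬ G.Adj v1 v4) (n24 : ¬ G.Adj v2 v4)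
    (e02 : v0 ≠ v2) (e03 : v0 ≠ v3) (e04 : v0 ≠ v4) (e13 : v1 ≠ v3) (e14 : v1 ≠ v4)
    (e24 : v2 ≠ v4) : False := by
  have e01 : v0 ≠ v1 := a01.ne
  have e12 : v1 ≠ v2 := a12.ne
  have e23 : v2 ≠ v3 := a23.ne
  have e34 : v3 ≠ v4 := a34.ne
  apply hno
  refine ⟨![v0, v1, v2, v3, v4], ?_, ⟨?_, ?_⟩, Or.inl rfl⟩
  · intro l
    fin_cases l <;> simp only [Matrix.cons_val_zero, Matrix.cons_val_one, Matrix.head_cons,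
      Matrix.cons_val_two, Matrix.tail_cons, Matrix.cons_val_three, Matrix.cons_val_four,
      Matrix.head_fin_const, Fin.mk_one, Fin.isValue] <;> assumption
  · intro a b hab
    fin_cases a <;> fin_cases b <;> simp_all
  · intro a b
    fin_cases a <;> fin_cases b <;>
      simp only [Matrix.cons_val_zero, Matrix.cons_val_one, Matrix.head_cons,
        Matrix.cons_val_two, Matrix.tail_cons, Matrix.cons_val_three, Matrix.cons_val_four,
        Matrix.cons_val', Matrix.empty_val', Matrix.cons_val_fin_one, Fin.isValue] <;>
      constructor <;> intro h <;>
      first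
        | decide
        | exact absurd h (by decide)
        | exact absurd h (G.irrefl)
        | assumption
        | exact a01.symm
        | exact a12.symm
        | exact a23.symm
        | exact a34.symm
        | exact absurd h n02
        | exact absurd h n03
        | exact absurd h n04
        | exact absurd h n13
        | exact absurd h n14
        | exact absurd h n24
        | exact absurd h.symm n02
        | exact absurd h.symm n03
        | exact absurd h.symm n04
        | exact absurd h.symm n13
        | exact absurd h.symm n14
        | exact absurd h.symm n24

end P5

section Dist

open SimpleGraph

variable {V : Type} {H : SimpleGraph V}

lemma dist_le_succ_of_adj {x a b : V} (hr : H.Reachable x a) (hadj : H.Adj a b) :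
    H.dist x b ≤ H.dist x a + 1 := by
  obtain ⟨p, hp⟩ := hr.exists_walk_length_eq_dist
  calc H.dist x b ≤ (p.concat hadj).length := SimpleGraph.dist_le _
    _ = H.dist x a + 1 := by rw [SimpleGraph.Walk.length_concat, hp]

lemma not_adj_of_dist_gap {x a b : V} (hr : H.Reachable x a)
    (h : H.dist x a + 1 < H.dist x b) : ¬ H.Adj a b := by
  intro hadj
  have := dist_le_succ_of_adj hr hadj
  omega

lemma dist_descend {x v : V} {n : ℕ} (hr : H.Reachable x v) (h : H.dist x v = n + 1) :
    ∃ w, H.Adj w v ∧ H.Reachable x w ∧ H.dist x w = n := by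
  obtain ⟨p, hp⟩ := hr.exists_walk_length_eq_dist
  rw [h] at hp
  have h997 : ¬ p.reverse.Nil := by
    intro hnil
    have := SimpleGraph.Walk.nil_iff_length_eq.mp hnil
    rw [SimpleGraph.Walk.length_reverse] at this
    omega
  obtain ⟨w, e, r, hrev⟩ := SimpleGraph.Walk.not_nil_iff.mp h997
  have hlen : r.length = n := by
    have h1 : p.reverse.length = r.length + 1 := by rw [hrev]; simp
    rw [SimpleGraph.Walk.length_reverse] at h1
    omega
  have hxw : H.Reachable x w := ⟨r.reverse⟩
  have hle : H.dist x w ≤ n := by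
    have := SimpleGraph.dist_le r.reverse
    rwa [SimpleGraph.Walk.length_reverse, hlen] at this
  have hge : n ≤ H.dist x w := by
    have := dist_le_succ_of_adj hxw e.symm
    omega
  exact ⟨w, e.symm, hxw, by omega⟩

end Dist
section MoreHelpers

open SimpleGraph

variable {G : SimpleGraph ℕ}

lemma reachIn_first_step {S : Set ℕ} {a b : ℕ} (h : ReachIn G S a b) (hne : a ≠ b) :
    ∃ c, G.Adj a c ∧ ReachIn G (S \ {a}) c b := by
  classical
  obtain ⟨ha, hb, hr⟩ := h
  obtain ⟨p, hp⟩ : ∃ p : (G.induce S).Walk ⟨a, ha⟩ ⟨b, hb⟩, p.IsPath := by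
    obtain ⟨q⟩ := hr
    exact ⟨q.toPath, q.toPath.2⟩
  cases p with
  | nil => exact absurd rfl hne
  | @cons u c v e q =>
    have hnodup := hp.support_nodup
    rw [SimpleGraph.Walk.support_cons] at hnodup
    have hanotin : ⟨a, ha⟩ ∉ q.support := by
      exact (List.nodup_cons.mp hnodup).1
    refine ⟨c, e, reachIn_of_walk_support q fun v hv => ⟨v.2, ?_⟩⟩
    simp only [Set.mem_singleton_iff]
    intro hva
    apply hanotin
    have : v = ⟨a, ha⟩ := Subtype.ext hva
    rwa [this] at hv

lemma reachIn_restrict {S T : Set ℕ} {a b : ℕ} (h : ReachIn G S a b)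
    (hT : ∀ v, ReachIn G S a v → v ∈ T) : ReachIn G T a b := by
  obtain ⟨ha, hb, ⟨p⟩⟩ := h
  exact reachIn_of_walk_support p fun v hv => hT v ⟨ha, v.2, ⟨p.takeUntil v hv⟩⟩

lemma algoColAux_junk (G : SimpleGraph ℕ) : ∀ {t w : ℕ}, t ≤ w → algoColAux G t w = PalColor.a 0 := by
  intro t
  induction t with
  | zero => intro w _; rfl
  | succ t ih =>
    intro w hw
    show (if w = t then step G (algoColAux G t) t else algoColAux G t w) = _
    rw [if_neg (by omega), ih (by omega)]

lemma bool_eq_of_ne_ne {a b c : Bool} (h1 : a ≠ c) (h2 : b ≠ c) : a = b := by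
  cases a <;> cases b <;> cases c <;> simp_all

lemma exists_at_dist {V : Type} {H : SimpleGraph V} {x v : V} {n : ℕ}
    (hr : H.Reachable x v) (h : H.dist x v = n) :
    ∀ k ≤ n, ∃ w, H.Reachable x w ∧ H.dist x w = k := by
  induction n generalizing v with
  | zero =>
    intro k hk
    have : k = 0 := by omega
    subst this
    exact ⟨v, hr, h⟩
  | succ n ih =>
    intro k hk
    rcases Nat.eq_or_lt_of_le hk with rfl | hlt
    · exact ⟨v, hr, h⟩
    · obtain ⟨w, _, hxw, hdw⟩ := dist_descend hr h
      exact ih hxw hdw k (by omega)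

end MoreHelpers
open SimpleGraph in
theorem stmt7 (G : SimpleGraph ℕ) (n : ℕ) (hfin : ∀ i j, G.Adj i j → i < n ∧ j < n)
    (hP9 : PFree G 9)
    (side : ℕ → Bool) (hside : ∀ x y, G.Adj x y → side x ≠ side y)
    (x : ℕ) (hx : x < n) (i : ℕ) (hi : 2 ≤ i) (hxi : hasColorIndex (algoCol G) x i)
    (y j : ℕ) (hyC : y ∈ comp G (algoCol G) x (i - 1) x) (hyx : y ≠ x)
    (hyj : hasColorIndex (algoCol G) y j)
    (hopp : side y ≠ side x) (hnadj : ¬ G.Adj x y)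
    (hnoP5 : NoP5From G (insert x (compMinus G (algoCol G) x (i - 1) x y)) x) :
    ∃ z, G.Adj x z ∧ z ∈ compMinus G (algoCol G) x (i - 1) x y ∧
      UnivTo G (algoCol G) x j y z := by
  classical
  have hyCreach : ReachIn G (domSet (algoCol G) x (i - 1) x) x y := hyC
  have hyD : y ∈ domSet (algoCol G) x (i - 1) x := reachIn_right_mem hyCreach
  have hjy : (algoCol G y).index = j := hasColorIndex_index hyj
  have hyfacts : y < x ∧ 1 ≤ j ∧ j ≤ i - 1 := by
    rcases hyD with ⟨h1, h2, h3⟩ | h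
    · rw [hjy] at h2 h3; exact ⟨h1, h2, h3⟩
    · exact absurd h hyx
  obtain ⟨hylt, hj1, hji⟩ := hyfacts
  set DS : Set ℕ := domSet (algoCol G) x (i - 1) x \ {x} with hDSdef
  set Cm : Set ℕ := compMinus G (algoCol G) x (i - 1) x y with hCmdef
  set DY : Set ℕ := domSet (algoCol G) x (j - 1) y with hDYdef
  set B : Set ℕ := comp G (algoCol G) x (j - 1) y with hBdef
  have hCm_def : ∀ w, w ∈ Cm ↔ ReachIn G DS y w := fun w => Iff.rfl
  have hB_def : ∀ w, w ∈ B ↔ ReachIn G DY y w := fun w => Iff.rfl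
  have hxDS : x ∉ DS := fun h => h.2 rfl
  have hxCm : x ∉ Cm := fun h => hxDS (reachIn_right_mem h)
  have hyDY : y ∈ DY := Or.inr rfl
  have hyB : y ∈ B := reachIn_refl hyDY
  have hDYsub : DY ⊆ DS := by
    rintro w (⟨h1, h2, h3⟩ | rfl)
    · exact ⟨Or.inl ⟨h1, h2, by omega⟩, by simp; omega⟩
    · refine ⟨Or.inl ⟨hylt, ?_, ?_⟩, by simp; omega⟩
      · rw [hjy]; omega
      · rw [hjy]; omega
  have hBsubCm : B ⊆ Cm := fun w hw => reachIn_mono hDYsub hw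
  have hCmreach : ∀ w ∈ Cm, ReachIn G Cm y w := fun w hw => reachIn_restrict hw fun v hv => hv
  have hBreachB : ∀ w ∈ B, ReachIn G B y w := fun w hw => reachIn_restrict hw fun v hv => hv
  -- a neighbor of x inside Cm
  obtain ⟨z1, hz1adj, hz1⟩ : ∃ c, G.Adj x c ∧ c ∈ Cm := by
    obtain ⟨c, hc1, hc2⟩ := reachIn_first_step hyCreach (Ne.symm hyx)
    exact ⟨c, hc1, reachIn_symm hc2⟩
  by_cases hBy : ∀ b ∈ B, b = y
  · refine ⟨z1, hz1adj, hz1, Or.inr ?_⟩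
    intro v hvB hnev
    have := hBy v hvB
    subst this
    exact absurd (evenReachIn_refl hyDY) hnev
  · -- B has a vertex besides y, hence j ≥ 2
    push_neg at hBy
    obtain ⟨b0, hb0B, hb0y⟩ := hBy
    have hj2 : 2 ≤ j := by
      rcases reachIn_right_mem (hb0B : ReachIn G DY y b0) with ⟨_, h2, h3⟩ | h
      · omega
      · exact absurd h hb0y
    -- the two mixed a_{j-1} witnesses from the moment y was colored
    have hmix : MixedA G (algoColAux G y) y (j - 1) :=
      mixedA_of_mIdx G hj2 (mIdx_eq_of_hasColorIndex G hyj)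
    obtain ⟨p1, hp1c, q1, hq1c, hp1a, hq1a, hpq1nev⟩ := hmix
    have hwit : ∀ r : ℕ, r ∈ comp G (algoColAux G y) y (j - 1) y →
        algoColAux G y r = PalColor.a (j - 1) →
        (r < y ∧ r ∈ B ∧ algoCol G r = PalColor.a (j - 1)) := by
      intro r hrc hra
      have hrlt : r < y := by
        rcases reachIn_right_mem (hrc : ReachIn G (domSet (algoColAux G y) y (j - 1) y) y r)
          with ⟨h1, _, _⟩ | h
        · exact h1
        · rw [h, algoColAux_junk G (le_refl y)] at hra
          have : (0 : ℕ) = j - 1 := PalColor.a.inj hra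
          omega
      have hsub : domSet (algoColAux G y) y (j - 1) y ⊆ DY := by
        rintro w (⟨h1, h2, h3⟩ | rfl)
        · rw [algoColAux_eq G h1] at h2 h3
          exact Or.inl ⟨by omega, h2, h3⟩
        · exact Or.inr rfl
      exact ⟨hrlt, reachIn_mono hsub hrc, by rw [← algoColAux_eq G hrlt]; exact hra⟩
    obtain ⟨hp1lt, hp1B, hp1col⟩ := hwit p1 hp1c hp1a
    obtain ⟨hq1lt, hq1B, hq1col⟩ := hwit q1 hq1c hq1a
    have hpq1side : side p1 ≠ side q1 :=
      side_ne_of_not_even side hside (reachIn_trans (reachIn_symm hp1c) hq1c) hpq1nev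
    have hsep : ¬ ReachIn G (Sk G x (j - 1)) p1 q1 := fun h =>
      hpq1side (INV G side hside x (j - 1) p1 q1 (by omega) h hp1col hq1col)
    have hBSk : ∀ v ∈ B, v ≠ y → v ∈ Sk G x (j - 1) := by
      intro v hv hvy
      rcases reachIn_right_mem (hv : ReachIn G DY y v) with ⟨h1, h2, h3⟩ | h
      · exact ⟨h1, h2, h3⟩
      · exact absurd h hvy
    -- each vertex of B \ {y} is connected inside B \ {y} to a neighbor of y
    have hnbr : ∀ p ∈ B, p ≠ y → ∃ c, G.Adj y c ∧ c ∈ B ∧ ReachIn G (B \ {y}) c p := by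
      intro p hp hpy
      obtain ⟨c, hyc, hcreach⟩ := reachIn_first_step (hp : ReachIn G DY y p) (Ne.symm hpy)
      have hcB : c ∈ B := reachIn_adj hyDY (reachIn_left_mem hcreach).1 hyc
      refine ⟨c, hyc, hcB, reachIn_restrict hcreach ?_⟩
      intro v hvreach
      have hvmem := reachIn_right_mem hvreach
      refine ⟨reachIn_trans (hcB : ReachIn G DY y c)
        (reachIn_mono Set.diff_subset hvreach), ?_⟩
      simpa using hvmem.2
    -- Lemma U: a neighbor of x (in Cm) adjacent to one neighbor of y in B is adjacent to all
    have lemU : ∀ w, G.Adj x w → w ∈ Cm → ∀ a, G.Adj y a → a ∈ B → G.Adj w a →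
        ∀ b, G.Adj y b → b ∈ B → G.Adj w b := by
      intro w hxw hwCm a hya haB hwa b hyb hbB
      by_contra hwb
      have hsw : side w = side y := bool_eq_of_ne_ne (hside x w hxw).symm hopp
      have hsa : side a = side x := bool_eq_of_ne_ne (hside y a hya).symm fun h => hopp h.symm
      have hsb : side b = side x := bool_eq_of_ne_ne (hside y b hyb).symm fun h => hopp h.symm
      have hyCm : y ∈ Cm := hBsubCm hyB
      have haCm : a ∈ Cm := hBsubCm haB
      have hbCm : b ∈ Cm := hBsubCm hbB
      refine p5_contra hnoP5 (Set.mem_insert x Cm) (Set.mem_insert_of_mem _ hwCm)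
        (Set.mem_insert_of_mem _ haCm) (Set.mem_insert_of_mem _ hyCm)
        (Set.mem_insert_of_mem _ hbCm) hxw hwa hya.symm hyb
        (fun h => hside x a h hsa.symm) hnadj (fun h => hside x b h hsb.symm)
        (fun h => hside w y h hsw) hwb (fun h => hside a b h (hsa.trans hsb.symm))
        (fun h => hxCm (h ▸ haCm)) (Ne.symm hyx) (fun h => hxCm (h ▸ hbCm))
        (fun h => hnadj (h ▸ hxw)) (fun h => hopp (by rw [← hsw, h, hsb]))
        (fun h => hwb (h ▸ hwa))
    -- no neighbor of x inside B can be adjacent to a neighbor of y: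
    -- it would merge the components of p1 and q1 in B \ {y}
    have noWB : ∀ w, G.Adj x w → w ∈ B → ∀ a, G.Adj y a → a ∈ B → G.Adj w a → False := by
      intro w hxw hwB a hya haB hwa
      obtain ⟨c1, hyc1, hc1B, hc1p⟩ := hnbr p1 hp1B (by omega)
      obtain ⟨c2, hyc2, hc2B, hc2q⟩ := hnbr q1 hq1B (by omega)
      have hwc1 : G.Adj w c1 := lemU w hxw (hBsubCm hwB) a hya haB hwa c1 hyc1 hc1B
      have hwc2 : G.Adj w c2 := lemU w hxw (hBsubCm hwB) a hya haB hwa c2 hyc2 hc2B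
      have hwny : w ∉ ({y} : Set ℕ) := by
        simp only [Set.mem_singleton_iff]
        exact fun h => hnadj (h ▸ hxw)
      have hc1ny : c1 ∉ ({y} : Set ℕ) := by
        simp only [Set.mem_singleton_iff]
        exact fun h => G.irrefl (h ▸ hyc1)
      have hc2ny : c2 ∉ ({y} : Set ℕ) := by
        simp only [Set.mem_singleton_iff]
        exact fun h => G.irrefl (h ▸ hyc2)
      have hreach : ReachIn G (B \ {y}) p1 q1 :=
        reachIn_trans (reachIn_symm hc1p)
          (reachIn_trans (reachIn_adj ⟨hc1B, hc1ny⟩ ⟨hwB, hwny⟩ hwc1.symm)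
            (reachIn_trans (reachIn_adj ⟨hwB, hwny⟩ ⟨hc2B, hc2ny⟩ hwc2) hc2q))
      exact hsep (reachIn_mono (fun v hv => hBSk v hv.1 (by simpa using hv.2)) hreach)
    -- every vertex of Cm on x's side has a common neighbor with x inside Cm
    have hdist2 : ∀ u, u ∈ Cm → side u = side x → ∃ zz, G.Adj x zz ∧ zz ∈ Cm ∧ G.Adj zz u := by
      intro u huCm hsu
      have hxSC : x ∈ insert x Cm := Set.mem_insert x Cm
      have hreachSC : ReachIn G (insert x Cm) x u :=
        reachIn_trans (reachIn_adj hxSC (Set.mem_insert_of_mem _ hz1) hz1adj)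
          (reachIn_mono (Set.subset_insert x Cm)
            (reachIn_trans (reachIn_symm (hCmreach z1 hz1)) (hCmreach u huCm)))
      obtain ⟨hx', hu', hr⟩ := hreachSC
      set Cg := G.induce (insert x Cm) with hCgdef
      set xS : (insert x Cm : Set ℕ) := ⟨x, hx'⟩ with hxSdef
      have hd0 : Cg.dist xS xS = 0 := SimpleGraph.dist_self
      have hne : ∀ a b : (insert x Cm : Set ℕ), Cg.dist xS a ≠ Cg.dist xS b →
          (a : ℕ) ≠ (b : ℕ) := fun a b hd h => hd (congrArg _ (Subtype.ext h))
      have heven : Even (Cg.dist xS ⟨u, hu'⟩) := by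
        obtain ⟨p, hp⟩ := hr.exists_walk_length_eq_dist
        rw [← hp]
        exact (walk_parity side hside p).mpr hsu.symm
      have hnz : Cg.dist xS ⟨u, hu'⟩ ≠ 0 := by
        intro h
        have := (hr.dist_eq_zero_iff).mp h
        rw [Subtype.mk.injEq] at this
        exact hxCm (this ▸ huCm)
      by_cases hn4 : 4 ≤ Cg.dist xS ⟨u, hu'⟩
      · exfalso
        obtain ⟨w4, hw4r, hw4d⟩ := exists_at_dist hr rfl 4 hn4
        obtain ⟨w3, ha34, hw3r, hw3d⟩ := dist_descend hw4r hw4d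
        obtain ⟨w2, ha23, hw2r, hw2d⟩ := dist_descend hw3r hw3d
        obtain ⟨w1, ha12, hw1r, hw1d⟩ := dist_descend hw2r hw2d
        obtain ⟨w0, ha01, hw0r, hw0d⟩ := dist_descend hw1r hw1d
        have hw0x : w0 = xS := ((hw0r.dist_eq_zero_iff).mp hw0d).symm
        rw [hw0x] at ha01
        exact p5_contra hnoP5 hx' w1.2 w2.2 w3.2 w4.2 ha01 ha12 ha23 ha34
          (fun h => not_adj_of_dist_gap (H := Cg) (Reachable.refl xS)
            (by rw [hd0, hw2d]; omega) h)
          (fun h => not_adj_of_dist_gap (H := Cg) (Reachable.refl xS)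
            (by rw [hd0, hw3d]; omega) h)
          (fun h => not_adj_of_dist_gap (H := Cg) (Reachable.refl xS)
            (by rw [hd0, hw4d]; omega) h)
          (fun h => not_adj_of_dist_gap (H := Cg) hw1r (by rw [hw1d, hw3d]; omega) h)
          (fun h => not_adj_of_dist_gap (H := Cg) hw1r (by rw [hw1d, hw4d]; omega) h)
          (fun h => not_adj_of_dist_gap (H := Cg) hw2r (by rw [hw2d, hw4d]; omega) h)
          (hne xS w2 (by rw [hd0, hw2d]; omega)) (hne xS w3 (by rw [hd0, hw3d]; omega))
          (hne xS w4 (by rw [hd0, hw4d]; omega)) (hne w1 w3 (by rw [hw1d, hw3d]; omega))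
          (hne w1 w4 (by rw [hw1d, hw4d]; omega)) (hne w2 w4 (by rw [hw2d, hw4d]; omega))
      · have hn2 : Cg.dist xS ⟨u, hu'⟩ = 2 := by
          obtain ⟨m, hm⟩ := heven
          omega
        obtain ⟨zz, hazz, hzzr, hzzd⟩ := dist_descend hr hn2
        obtain ⟨w0, ha0, hw0r, hw0d⟩ := dist_descend hzzr hzzd
        have hw0x : w0 = xS := ((hw0r.dist_eq_zero_iff).mp hw0d).symm
        rw [hw0x] at ha0
        have hzzCm : (zz : ℕ) ∈ Cm := by
          rcases zz.2 with h | h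
          · exfalso
            have : zz = xS := Subtype.ext h
            rw [this, hd0] at hzzd
            omega
          · exact h
        exact ⟨zz, ha0, hzzCm, hazz⟩
    -- pick the witness z: a common neighbor of x and of a neighbor c1 of y in B
    obtain ⟨c1, hyc1, hc1B, _⟩ := hnbr p1 hp1B (by omega)
    have hsc1 : side c1 = side x := bool_eq_of_ne_ne (hside y c1 hyc1).symm fun h => hopp h.symm
    obtain ⟨z, hxz, hzCm, hzc1⟩ := hdist2 c1 (hBsubCm hc1B) hsc1
    have hsz : side z = side y := bool_eq_of_ne_ne (hside x z hxz).symm hopp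
    set Bg := G.induce B with hBgdef
    set yS : (B : Set ℕ) := ⟨y, hyB⟩ with hySdef
    have hBreach : ∀ (v : ℕ) (hv : v ∈ B), Bg.Reachable yS ⟨v, hv⟩ := by
      intro v hv
      obtain ⟨h1, h2, hr⟩ := hBreachB v hv
      exact hr
    have hparB : ∀ (v : ℕ) (hv : v ∈ B), Even (Bg.dist yS ⟨v, hv⟩) ↔ side v = side y := by
      intro v hv
      obtain ⟨p, hp⟩ := (hBreach v hv).exists_walk_length_eq_dist
      rw [← hp]
      constructor
      · intro he; exact ((walk_parity side hside p).mp he).symm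
      · intro hs; exact (walk_parity side hside p).mpr hs.symm
    have hd0B : Bg.dist yS yS = 0 := SimpleGraph.dist_self
    have hneB : ∀ a b : (B : Set ℕ), Bg.dist yS a ≠ Bg.dist yS b → (a : ℕ) ≠ (b : ℕ) :=
      fun a b hd h => hd (congrArg _ (Subtype.ext h))
    have hd1adj : ∀ v : (B : Set ℕ), Bg.dist yS v = 1 → G.Adj y (v : ℕ) := by
      intro v hdv
      obtain ⟨w0, ha0, hw0r, hw0d⟩ := dist_descend (hBreach v.1 v.2) hdv
      have hw0y : w0 = yS := ((hw0r.dist_eq_zero_iff).mp hw0d).symm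
      rw [hw0y] at ha0
      exact ha0
    -- main claim, by strong induction on the distance from y inside B
    have main : ∀ (nn : ℕ) (v : ℕ) (hv : v ∈ B), Bg.dist yS ⟨v, hv⟩ = nn →
        (side v = side x → G.Adj z v) ∧ (side v = side y → 2 ≤ nn → ¬ G.Adj x v) := by
      intro nn
      induction nn using Nat.strong_induction_on with
      | _ nn ih =>
        intro v hv hdv
        constructor
        · -- vertices on x's side are adjacent to z
          intro hsv
          have hodd : ¬ Even nn := by
            intro he
            rw [← hdv] at he
            exact hopp (((hparB v hv).mp he).symm.trans hsv)
          by_cases hnn : nn = 1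
          · exact lemU z hxz hzCm c1 hyc1 hc1B hzc1 v
              (hd1adj ⟨v, hv⟩ (by rw [hdv]; exact hnn)) hv
          · have hnn3 : 3 ≤ nn := by
              rcases Nat.even_or_odd nn with he | ⟨m, hm⟩
              · exact absurd he hodd
              · omega
            obtain ⟨β, haβv, hβr, hβd⟩ :=
              dist_descend (hBreach v hv) (show Bg.dist yS ⟨v, hv⟩ = (nn - 1) + 1 by
                rw [hdv]; omega)
            obtain ⟨α, haαβ, hαr, hαd⟩ :=
              dist_descend hβr (show Bg.dist yS β = (nn - 2) + 1 by rw [hβd]; omega)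
            have hsβ : side (β : ℕ) = side y := by
              refine (hparB β.1 β.2).mp ?_
              rw [hβd]
              rcases Nat.even_or_odd nn with he | ⟨m, hm⟩
              · exact absurd he hodd
              · exact ⟨m, by omega⟩
            have hsα : side (α : ℕ) = side x := by
              refine bool_eq_of_ne_ne ?_ fun h => hopp h.symm
              intro hs
              have := (hparB α.1 α.2).mpr hs
              rw [hαd] at this
              obtain ⟨m, hm⟩ := this
              rcases Nat.even_or_odd nn with he | ⟨m2, hm2⟩
              · exact hodd he
              · omega
            have hzα : G.Adj z (α : ℕ) := (ih (nn - 2) (by omega) α.1 α.2 hαd).1 hsα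
            have hIHβ : ¬ G.Adj x (β : ℕ) :=
              (ih (nn - 1) (by omega) β.1 β.2 hβd).2 hsβ (by omega)
            by_contra hzv
            exact p5_contra hnoP5 (Set.mem_insert x Cm) (Set.mem_insert_of_mem _ hzCm)
              (Set.mem_insert_of_mem _ (hBsubCm α.2)) (Set.mem_insert_of_mem _ (hBsubCm β.2))
              (Set.mem_insert_of_mem _ (hBsubCm hv)) hxz hzα haαβ haβv
              (fun h => hside x α.1 h hsα.symm) (fun h => hIHβ h)
              (fun h => hside x v h hsv.symm)
              (fun h => hside z β.1 h (hsz.trans hsβ.symm)) hzv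
              (fun h => hside α.1 v h (hsα.trans hsv.symm))
              (fun h => hxCm (h ▸ hBsubCm α.2)) (fun h => hxCm (h ▸ hBsubCm β.2))
              (fun h => hxCm (h ▸ hBsubCm hv)) (fun h => hIHβ (h ▸ hxz))
              (fun h => hopp (by rw [← hsz, h, hsv]))
              (hneB α ⟨v, hv⟩ (by rw [hαd, hdv]; omega))
        · -- vertices on y's side at distance ≥ 2 are not adjacent to x
          intro hsv h2n hxv
          have heva : Even nn := by
            rw [← hdv]
            exact (hparB v hv).mpr hsv
          by_cases hnn2 : nn = 2
          · obtain ⟨α, haαv, hαr, hαd⟩ :=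
              dist_descend (hBreach v hv) (show Bg.dist yS ⟨v, hv⟩ = 1 + 1 by
                rw [hdv]; omega)
            have hyα : G.Adj y (α : ℕ) := hd1adj α hαd
            exact noWB v hxv hv α.1 hyα α.2 haαv.symm
          · have hnn4 : 4 ≤ nn := by
              obtain ⟨m, hm⟩ := heva
              omega
            obtain ⟨α, haαv, hαr, hαd⟩ :=
              dist_descend (hBreach v hv) (show Bg.dist yS ⟨v, hv⟩ = (nn - 1) + 1 by
                rw [hdv]; omega)
            obtain ⟨β2, haβ2α, hβ2r, hβ2d⟩ :=
              dist_descend hαr (show Bg.dist yS α = (nn - 2) + 1 by rw [hαd]; omega)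
            obtain ⟨α2, haα2β2, hα2r, hα2d⟩ :=
              dist_descend hβ2r (show Bg.dist yS β2 = (nn - 3) + 1 by rw [hβ2d]; omega)
            have hsα : side (α : ℕ) = side x := by
              refine bool_eq_of_ne_ne ?_ fun h => hopp h.symm
              intro hs
              have := (hparB α.1 α.2).mpr hs
              rw [hαd] at this
              obtain ⟨m, hm⟩ := this
              obtain ⟨m2, hm2⟩ := heva
              omega
            have hsβ2 : side (β2 : ℕ) = side y := by
              refine (hparB β2.1 β2.2).mp ?_
              rw [hβ2d]
              obtain ⟨m, hm⟩ := heva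
              exact ⟨m - 1, by omega⟩
            have hsα2 : side (α2 : ℕ) = side x := by
              refine bool_eq_of_ne_ne ?_ fun h => hopp h.symm
              intro hs
              have := (hparB α2.1 α2.2).mpr hs
              rw [hα2d] at this
              obtain ⟨m, hm⟩ := this
              obtain ⟨m2, hm2⟩ := heva
              omega
            have hIHβ2 : ¬ G.Adj x (β2 : ℕ) :=
              (ih (nn - 2) (by omega) β2.1 β2.2 hβ2d).2 hsβ2 (by omega)
            exact p5_contra hnoP5 (Set.mem_insert x Cm) (Set.mem_insert_of_mem _ (hBsubCm hv))
              (Set.mem_insert_of_mem _ (hBsubCm α.2)) (Set.mem_insert_of_mem _ (hBsubCm β2.2))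
              (Set.mem_insert_of_mem _ (hBsubCm α2.2)) hxv haαv.symm haβ2α.symm haα2β2.symm
              (fun h => hside x α.1 h hsα.symm) (fun h => hIHβ2 h)
              (fun h => hside x α2.1 h hsα2.symm)
              (fun h => hside v β2.1 h (hsv.trans hsβ2.symm))
              (fun h => not_adj_of_dist_gap (H := Bg) (a := α2) (b := ⟨v, hv⟩) hα2r
                (by rw [hα2d, hdv]; omega) h.symm)
              (fun h => hside α.1 α2.1 h (hsα.trans hsα2.symm))
              (fun h => hxCm (h ▸ hBsubCm α.2)) (fun h => hxCm (h ▸ hBsubCm β2.2))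
              (fun h => hxCm (h ▸ hBsubCm α2.2))
              (hneB ⟨v, hv⟩ β2 (by rw [hdv, hβ2d]; omega))
              (hneB ⟨v, hv⟩ α2 (by rw [hdv, hα2d]; omega))
              (hneB α α2 (by rw [hαd, hα2d]; omega))
    refine ⟨z, hxz, hzCm, Or.inr ?_⟩
    intro v hvB hnev
    have hsvy : side y ≠ side v := side_ne_of_not_even side hside hvB hnev
    have hsv : side v = side x := bool_eq_of_ne_ne (fun h => hsvy h.symm) fun h => hopp h.symm
    exact (main (Bg.dist yS ⟨v, hvB⟩) v hvB rfl).1 hsv
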